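/- arXiv:1302.0526 — 4 statements merged into one kernel-verified Lean document; each statement's English description precedes it below -/
import Mathlib

section
/- For a smooth non-constant function f of x and positive integers n, m, the composition of formal pseudodifferential operators ∂^{-n} ∘ f ∘ ∂^{-m} equals: (∂^{-n}f)·∂^{-m} + (terms of nonlocality order < m) when n < m; (∂^{-n}f)·∂^{-n} + (-1)^n ∂^{-n} ∘ (∂^{-n}f) + (terms of lower nonlocality) when n = m; and (-1)^m ∂^{-n} ∘ (∂^{-m}f) + (terms of lower nonlocality) when n > m. Here ∂^{-k}f denotes a k-fold antiderivative of f acting by multiplication. -/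
def Low {F A : Type*} [CommRing F] [Ring A] (mf : F →+* A) (d e : A) (n : ℕ) :
    AddSubgroup A :=
  AddSubgroup.closure
    ({x | ∃ (a b : F) (k : ℕ), k < n ∧ x = mf a * e ^ k * mf b} ∪
     {x | ∃ (a : F) (j : ℕ), x = mf a * d ^ j})

section Aux
variable {F A : Type*} [CommRing F] [Ring A] (mf : F →+* A) (δ ι : F → F)
    (hι : ∀ a : F, δ (ι a) = a)
    (d e : A) (hde : d * e = 1) (hed : e * d = 1)
    (hcomm : ∀ g : F, d * mf g = mf g * d + mf (δ g))

include hι hde hed hcomm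

lemma pic_ibp (g : F) : e * mf g * e = mf (ι g) * e - e * mf (ι g) := by
  have h1 : mf g = d * mf (ι g) - mf (ι g) * d := by
    have h := hcomm (ι g); rw [hι] at h; rw [h]; abel
  calc e * mf g * e = (e * d) * (mf (ι g) * e) - (e * mf (ι g)) * (d * e) := by
        rw [h1]; noncomm_ring
    _ = mf (ι g) * e - e * mf (ι g) := by rw [hed, hde, one_mul, mul_one]

lemma pic_step (g : F) (i j : ℕ) :
    e ^ (i + 1) * mf g * e ^ (j + 1)
      = e ^ i * mf (ι g) * e ^ (j + 1) - e ^ (i + 1) * mf (ι g) * e ^ j := by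
  have hpi : e ^ (i + 1) = e ^ i * e := pow_succ e i
  have hpj : e ^ (j + 1) = e * e ^ j := pow_succ' e j
  calc e ^ (i + 1) * mf g * e ^ (j + 1)
      = e ^ i * (e * mf g * e) * e ^ j := by rw [hpi, hpj]; noncomm_ring
    _ = e ^ i * (mf (ι g) * e - e * mf (ι g)) * e ^ j := by
        rw [pic_ibp mf δ ι hι d e hde hed hcomm]
    _ = e ^ i * mf (ι g) * (e * e ^ j) - (e ^ i * e) * mf (ι g) * e ^ j := by
        noncomm_ring
    _ = e ^ i * mf (ι g) * e ^ (j + 1) - e ^ (i + 1) * mf (ι g) * e ^ j := by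
        rw [← hpi, ← hpj]

lemma pic_sandwich (N : ℕ) :
    ∀ i, ∀ j, ∀ h : F, i < N → j < N → e ^ i * mf h * e ^ j ∈ Low mf d e N := by
  intro i
  induction i with
  | zero =>
    intro j h _ hj
    exact AddSubgroup.subset_closure (Or.inl ⟨h, 1, j, hj, by simp⟩)
  | succ i ih =>
    intro j
    induction j with
    | zero =>
      intro h hi _
      exact AddSubgroup.subset_closure (Or.inl ⟨1, h, i + 1, hi, by simp⟩)
    | succ j ihj =>
      intro h hi hj
      rw [pic_step mf δ ι hι d e hde hed hcomm]
      exact sub_mem (ih (j + 1) (ι h) (by omega) hj) (ihj (ι h) hi (by omega))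

lemma pic_lt (m : ℕ) :
    ∀ n, ∀ g : F, n < m →
      e ^ n * mf g * e ^ m - mf (ι^[n] g) * e ^ m ∈ Low mf d e m := by
  intro n
  induction n with
  | zero => intro g _; simp
  | succ n ih =>
    intro g hnm
    obtain ⟨m', rfl⟩ : ∃ m', m = m' + 1 := ⟨m - 1, by omega⟩
    have h1 := ih (ι g) (by omega)
    have h2 := pic_sandwich mf δ ι hι d e hde hed hcomm (m' + 1) (n + 1) m' (ι g) hnm (by omega)
    have heq : e ^ (n + 1) * mf g * e ^ (m' + 1) - mf (ι^[n + 1] g) * e ^ (m' + 1)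
        = (e ^ n * mf (ι g) * e ^ (m' + 1) - mf (ι^[n] (ι g)) * e ^ (m' + 1))
          - e ^ (n + 1) * mf (ι g) * e ^ m' := by
      rw [pic_step mf δ ι hι d e hde hed hcomm, Function.iterate_succ_apply]; abel
    rw [heq]
    exact sub_mem h1 h2

lemma pic_gt (n : ℕ) :
    ∀ m, ∀ g : F, m < n →
      e ^ n * mf g * e ^ m - ((-1 : ℤ) ^ m) • (e ^ n * mf (ι^[m] g)) ∈ Low mf d e n := by
  intro m
  induction m with
  | zero => intro g _; simp
  | succ m ih =>
    intro g hmn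
    obtain ⟨n', rfl⟩ : ∃ n', n = n' + 1 := ⟨n - 1, by omega⟩
    have h1 := pic_sandwich mf δ ι hι d e hde hed hcomm (n' + 1) n' (m + 1) (ι g) (by omega) hmn
    have h2 := ih (ι g) (by omega)
    have heq : e ^ (n' + 1) * mf g * e ^ (m + 1)
          - ((-1 : ℤ) ^ (m + 1)) • (e ^ (n' + 1) * mf (ι^[m + 1] g))
        = e ^ n' * mf (ι g) * e ^ (m + 1)
          - (e ^ (n' + 1) * mf (ι g) * e ^ m
              - ((-1 : ℤ) ^ m) • (e ^ (n' + 1) * mf (ι^[m] (ι g)))) := by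
      rw [pic_step mf δ ι hι d e hde hed hcomm, Function.iterate_succ_apply]
      have : ((-1 : ℤ) ^ (m + 1)) • (e ^ (n' + 1) * mf (ι^[m] (ι g)))
          = -(((-1 : ℤ) ^ m) • (e ^ (n' + 1) * mf (ι^[m] (ι g)))) := by
        rw [pow_succ, mul_smul, neg_one_zsmul, smul_neg]
      rw [this]; abel
    rw [heq]
    exact sub_mem h1 h2

lemma pic_eq (n : ℕ) (hn : 1 ≤ n) (g : F) :
    e ^ n * mf g * e ^ n
      - (mf (ι^[n] g) * e ^ n + ((-1 : ℤ) ^ n) • (e ^ n * mf (ι^[n] g)))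
      ∈ Low mf d e n := by
  obtain ⟨k, rfl⟩ : ∃ k, n = k + 1 := ⟨n - 1, by omega⟩
  have h1 := pic_lt mf δ ι hι d e hde hed hcomm (k + 1) k (ι g) (by omega)
  have h2 := pic_gt mf δ ι hι d e hde hed hcomm (k + 1) k (ι g) (by omega)
  have heq : e ^ (k + 1) * mf g * e ^ (k + 1)
        - (mf (ι^[k + 1] g) * e ^ (k + 1)
            + ((-1 : ℤ) ^ (k + 1)) • (e ^ (k + 1) * mf (ι^[k + 1] g)))
      = (e ^ k * mf (ι g) * e ^ (k + 1) - mf (ι^[k] (ι g)) * e ^ (k + 1))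
        - (e ^ (k + 1) * mf (ι g) * e ^ k
            - ((-1 : ℤ) ^ k) • (e ^ (k + 1) * mf (ι^[k] (ι g)))) := by
    rw [pic_step mf δ ι hι d e hde hed hcomm, Function.iterate_succ_apply]
    have : ((-1 : ℤ) ^ (k + 1)) • (e ^ (k + 1) * mf (ι^[k] (ι g)))
        = -(((-1 : ℤ) ^ k) • (e ^ (k + 1) * mf (ι^[k] (ι g)))) := by
      rw [pow_succ, mul_smul, neg_one_zsmul, smul_neg]
    rw [this]; abel
  rw [heq]
  exact sub_mem h1 h2

end Aux

/-- The composition lemma `∂^{-n} ∘ f ∘ ∂^{-m}` for a non-constant function `f`: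
* if `n < m` it equals `(∂^{-n}f)·∂^{-m}` modulo nonlocality order `< m`;
* if `n = m` it equals `(∂^{-n}f)·∂^{-n} + (-1)^n ∂^{-n}∘(∂^{-n}f)` modulo lower order;
* if `n > m` it equals `(-1)^m ∂^{-n}∘(∂^{-m}f)` modulo lower order.
Here `δ` is the `x`-derivative on coefficients, `ι` an antiderivative (`δ∘ι = id`),
`d = ∂`, `e = ∂⁻¹`, and `∂^{-k}f = ι^[k] f`; non-constancy of `f` means `δ f ≠ 0`. -/
theorem partial_inv_composition {F A : Type*} [CommRing F] [Ring A]
    (mf : F →+* A) (δ ι : F → F)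
    (hδadd : ∀ a b : F, δ (a + b) = δ a + δ b)
    (hLeib : ∀ a b : F, δ (a * b) = δ a * b + a * δ b)
    (hι : ∀ a : F, δ (ι a) = a)
    (d e : A) (hde : d * e = 1) (hed : e * d = 1)
    (hcomm : ∀ g : F, d * mf g = mf g * d + mf (δ g))
    (f : F) (hf : δ f ≠ 0)
    (n m : ℕ) (hn : 1 ≤ n) (hm : 1 ≤ m) :
    (n < m → e ^ n * mf f * e ^ m - mf (ι^[n] f) * e ^ m ∈ Low mf d e m) ∧
    (n = m → e ^ n * mf f * e ^ m
        - (mf (ι^[n] f) * e ^ n + ((-1 : ℤ) ^ n) • (e ^ n * mf (ι^[n] f)))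
        ∈ Low mf d e n) ∧
    (m < n → e ^ n * mf f * e ^ m - ((-1 : ℤ) ^ m) • (e ^ n * mf (ι^[m] f))
        ∈ Low mf d e n) := by
  refine ⟨fun h => pic_lt mf δ ι hι d e hde hed hcomm m n f h,
    fun h => ?_, fun h => pic_gt mf δ ι hι d e hde hed hcomm n m f h⟩
  subst h
  exact pic_eq mf δ ι hι d e hde hed hcomm n hn f
end

section
/- Suppose R is a recursion-type operator whose nonlocal part is R_- = ¼ K₀ ∂^{-1} γ₀^T with K₀ a local vector field and γ₀ a local one-form, and suppose K_s := R^s K₀ for s ≥ 0 satisfy: for each s, the pairing γ₀^T K_s is a total x-derivative of a local differential function. Then all vector fields K_s, s ≥ 0, are local (contain no ∂^{-1} terms). -/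
theorem Subalgebra.add_smul_mul_antideriv_mem {A : Type*} [CommRing A] [Algebra ℝ A]
    (S : Subalgebra ℝ A) {δ ι : A → A} (hιδ : ∀ z : A, ι (δ z) = z) (c : ℝ) {a b p : A}
    (ha : a ∈ S) (hb : b ∈ S) (hp : ∃ z : A, z ∈ S ∧ p = δ z) :
    a + c • (b * ι p) ∈ S := by
  obtain ⟨z, hzS, rfl⟩ := hp
  rw [hιδ]
  exact S.add_mem ha (S.smul_mem (S.mul_mem hb hzS) c)

/- `S` models the local differential functions inside the ring `Fh` of nonlocal ones;
`δ = ∂` and `ι = ∂⁻¹`. -/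
theorem positive_vector_fields_local_general {Fh : Type*} [CommRing Fh] [Algebra ℝ Fh]
    (S : Subalgebra ℝ Fh) (δ ι : Fh → Fh) (hιδ : ∀ z : Fh, ι (δ z) = z)
    (N : ℕ) (Rplus : (Fin N → Fh) → Fin N → Fh)
    (hRplus : ∀ v : Fin N → Fh, (∀ i, v i ∈ S) → ∀ i, Rplus v i ∈ S)
    (K₀ γ₀ : Fin N → Fh) (hK₀ : ∀ i, K₀ i ∈ S)
    (K : ℕ → Fin N → Fh) (hK0 : K 0 = K₀)
    (hrec : ∀ s i, K (s + 1) i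
      = Rplus (K s) i + (1/4 : ℝ) • (K₀ i * ι (∑ j, γ₀ j * K s j)))
    (hsym : ∀ s : ℕ, ∃ z : Fh, z ∈ S ∧ (∑ j, γ₀ j * K s j) = δ z) :
    ∀ s i, K s i ∈ S := by
  intro s
  induction s with
  | zero => simpa only [hK0] using hK₀
  | succ s ih =>
    intro i
    rw [hrec s i]
    exact S.add_smul_mul_antideriv_mem hιδ _ (hRplus (K s) ih i) (hK₀ i) (hsym s)

/-- Locality of the positive cKdV vector fields.  `Fh` is the ring of (possibly nonlocal)
differential functions, `S` the subalgebra of local differential functions, `δ = ∂` and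
`ι = ∂⁻¹` (formal antiderivative with `ι ∘ δ = id`).  The recursion operator is
`R = R_+ + ¼ K₀ ∂⁻¹ γ₀^T` with `R_+` local (mapping local vectors to local vectors), and
`K_{s+1} = R(K_s) = R_+(K_s) + ¼ K₀ · ∂⁻¹(γ₀^T K_s)`.  If every pairing `γ₀^T K_s` is a
total `x`-derivative of a local function, then all vector fields `K_s`, `s ≥ 0`, are local. -/
theorem positive_vector_fields_local {Fh : Type*} [CommRing Fh] [Algebra ℝ Fh]
    (S : Subalgebra ℝ Fh) (δ ι : Fh → Fh) (hιδ : ∀ z : Fh, ι (δ z) = z)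
    (N : ℕ) (Rplus : (Fin N → Fh) → Fin N → Fh)
    (hRplus : ∀ v : Fin N → Fh, (∀ i, v i ∈ S) → ∀ i, Rplus v i ∈ S)
    (K₀ γ₀ : Fin N → Fh) (hK₀ : ∀ i, K₀ i ∈ S) (hγ₀ : ∀ i, γ₀ i ∈ S)
    (K : ℕ → Fin N → Fh) (hK0 : K 0 = K₀)
    (hrec : ∀ s i, K (s + 1) i
      = Rplus (K s) i + (1/4 : ℝ) • (K₀ i * ι (∑ j, γ₀ j * K s j)))
    (hsym : ∀ s : ℕ, ∃ z : Fh, z ∈ S ∧ (∑ j, γ₀ j * K s j) = δ z) :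
    ∀ s i, K s i ∈ S :=
  positive_vector_fields_local_general S δ ι hιδ N Rplus hRplus K₀ γ₀ hK₀ K hK0 hrec hsym
end

section
/- Let R have nonlocal part R_- = ¼K₀∂^{-1}γ₀^T so that (R†)_- = -¼γ₀∂^{-1}K₀^T, and define γ_{s+1} = (R†)_+(γ_s) - ¼γ₀ ∂^{-1}(K₀^T γ_s). If γ₀ is local and for every s the pairing K₀^T γ_s is a total x-derivative of a local function, then all one-forms γ_s, s ≥ 0, are local. -/
theorem positive_one_forms_local_general {Fh : Type*} [CommRing Fh] [Algebra ℝ Fh]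
    (S : Subalgebra ℝ Fh) (δ ι : Fh → Fh) (hιδ : ∀ z : Fh, ι (δ z) = z)
    (N : ℕ) (Rdplus : (Fin N → Fh) → Fin N → Fh)
    (hRdplus : ∀ v : Fin N → Fh, (∀ i, v i ∈ S) → ∀ i, Rdplus v i ∈ S)
    (K₀ γ₀ : Fin N → Fh) (hγ₀ : ∀ i, γ₀ i ∈ S)
    (γ : ℕ → Fin N → Fh) (hγ0 : γ 0 = γ₀)
    (hrec : ∀ s i, γ (s + 1) i
      = Rdplus (γ s) i - (1/4 : ℝ) • (γ₀ i * ι (∑ j, K₀ j * γ s j)))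
    (hsym : ∀ s : ℕ, ∃ z : Fh, z ∈ S ∧ (∑ j, K₀ j * γ s j) = δ z) :
    ∀ s i, γ s i ∈ S := by
  intro s
  induction s with
  | zero => rw [hγ0]; exact hγ₀
  | succ s ih =>
    intro i
    obtain ⟨z, hz, hpairing⟩ := hsym s
    -- the pairing is exact, so `∂⁻¹` cancels and the nonlocal tail is the local `γ₀ i * z`
    rw [hrec s i, hpairing, hιδ]
    exact sub_mem (hRdplus _ ih i) (S.smul_mem (mul_mem (hγ₀ i) hz) _)

/-- Locality of the positive cKdV conserved one-forms.  With `(R†)_- = -¼ γ₀ ∂⁻¹ K₀^T` and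
`γ_{s+1} = (R†)_+(γ_s) - ¼ γ₀ · ∂⁻¹(K₀^T γ_s)`, if `γ₀` is local and every pairing
`K₀^T γ_s` is a total `x`-derivative of a local function, then all one-forms `γ_s`, `s ≥ 0`,
are local.  Here `S` is the subalgebra of local differential functions, `δ = ∂`,
`ι = ∂⁻¹` with `ι ∘ δ = id`, and `(R†)_+` maps local vectors to local vectors. -/
theorem positive_one_forms_local {Fh : Type*} [CommRing Fh] [Algebra ℝ Fh]
    (S : Subalgebra ℝ Fh) (δ ι : Fh → Fh) (hιδ : ∀ z : Fh, ι (δ z) = z)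
    (N : ℕ) (Rdplus : (Fin N → Fh) → Fin N → Fh)
    (hRdplus : ∀ v : Fin N → Fh, (∀ i, v i ∈ S) → ∀ i, Rdplus v i ∈ S)
    (K₀ γ₀ : Fin N → Fh) (hK₀ : ∀ i, K₀ i ∈ S) (hγ₀ : ∀ i, γ₀ i ∈ S)
    (γ : ℕ → Fin N → Fh) (hγ0 : γ 0 = γ₀)
    (hrec : ∀ s i, γ (s + 1) i
      = Rdplus (γ s) i - (1/4 : ℝ) • (γ₀ i * ι (∑ j, K₀ j * γ s j)))
    (hsym : ∀ s : ℕ, ∃ z : Fh, z ∈ S ∧ (∑ j, K₀ j * γ s j) = δ z) :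
    ∀ s i, γ s i ∈ S :=
  positive_one_forms_local_general S δ ι hιδ N Rdplus hRdplus K₀ γ₀ hγ₀ γ hγ0 hrec hsym
end

section
/- For the inverse cKdV recursion operator with (R^{-1})_- = K_{-1} ∂^{-1} γ_{-1}^T, the nonlocal part of B_{-s} = R^{-s}B₀ for s > 0 equals (B_{-s})_- = -Σ_{j=1}^{s} K_{-j} ∂^{-1} K_{-s+j-1}^T, given that (R^{-s})_- = Σ_{j=1}^{s} K_{-j} ∂^{-1} γ_{-s+j-1}^T, B₀ is local and skew-adjoint, and B₀γ_{-k} = K_{-k} for k ≥ 1. -/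
/-- A matrix operator has nonlocality order `< n` iff all its entries do. -/
def MLow {F A : Type*} [CommRing F] [Ring A] {N : ℕ} (mf : F →+* A) (d e : A) (n : ℕ)
    (Φ : Matrix (Fin N) (Fin N) A) : Prop :=
  ∀ i j, Φ i j ∈ Low mf d e n

/-- The weakly nonlocal rank-one term `W ∂^{-n} φ^T`. -/
def rankOne {F A : Type*} [CommRing F] [Ring A] {N : ℕ} (mf : F →+* A) (e : A) (n : ℕ)
    (W φ : Fin N → F) : Matrix (Fin N) (Fin N) A :=
  Matrix.of fun i j => mf (W i) * e ^ n * mf (φ j)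

/-- Application of a matrix operator to a column vector of functions, via the action
`act` of scalar operators on functions. -/
def appM {F A : Type*} [CommRing F] [Ring A] {N : ℕ} (act : A → F → F)
    (Φ : Matrix (Fin N) (Fin N) A) (v : Fin N → F) : Fin N → F :=
  fun i => ∑ j, act (Φ i j) (v j)

/-- Application of the formal adjoint `Φ† = (adj Φ_{ji})_{ij}` to a column vector. -/
def adjApp {F A : Type*} [CommRing F] [Ring A] {N : ℕ} (adj : A → A) (act : A → F → F)
    (Φ : Matrix (Fin N) (Fin N) A) (v : Fin N → F) : Fin N → F :=
  fun i => ∑ j, act (adj (Φ j i)) (v j)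

section DiffOps

variable {F A : Type*} [CommRing F] [Ring A] (mf : F →+* A) (d : A)

def diffOps : AddSubgroup A :=
  AddSubgroup.closure {x | ∃ (a : F) (j : ℕ), x = mf a * d ^ j}

lemma monomial_mem_diffOps (a : F) (j : ℕ) : mf a * d ^ j ∈ diffOps mf d :=
  AddSubgroup.subset_closure ⟨a, j, rfl⟩

lemma low_one_eq_diffOps (e : A) : Low mf d e 1 = diffOps mf d := by
  refine le_antisymm ?_ (AddSubgroup.closure_mono Set.subset_union_right)
  rw [Low, AddSubgroup.closure_le]
  rintro x (⟨a, b, k, hk, rfl⟩ | ⟨a, j, rfl⟩)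
  · obtain rfl : k = 0 := by omega
    simpa [map_mul] using monomial_mem_diffOps mf d (a * b) 0
  · exact monomial_mem_diffOps mf d a j

variable {mf d}

lemma diffOps_le {K : AddSubgroup A} (hK : ∀ (a : F) (j : ℕ), mf a * d ^ j ∈ K) :
    diffOps mf d ≤ K :=
  (AddSubgroup.closure_le K).2 fun _ ⟨a, j, hx⟩ => hx ▸ hK a j

lemma mf_mul_mem_diffOps (a : F) {x : A} (hx : x ∈ diffOps mf d) :
    mf a * x ∈ diffOps mf d := by
  suffices diffOps mf d ≤ (diffOps mf d).comap (AddMonoidHom.mulLeft (mf a)) from this hx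
  refine diffOps_le fun b j => ?_
  simpa [← mul_assoc] using monomial_mem_diffOps mf d (a * b) j

lemma mul_d_pow_mem_diffOps {x : A} (hx : x ∈ diffOps mf d) (k : ℕ) :
    x * d ^ k ∈ diffOps mf d := by
  suffices diffOps mf d ≤ (diffOps mf d).comap (AddMonoidHom.mulRight (d ^ k)) from this hx
  refine diffOps_le fun a j => ?_
  simpa [mul_assoc, ← pow_add] using monomial_mem_diffOps mf d a (j + k)

variable {δ : F → F} (hcomm : ∀ g : F, d * mf g = mf g * d + mf (δ g))
include hcomm

lemma d_pow_mul_mf_mem_diffOps (j : ℕ) (b : F) : d ^ j * mf b ∈ diffOps mf d := by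
  induction j generalizing b with
  | zero => simpa using monomial_mem_diffOps mf d b 0
  | succ n ih =>
    have hsplit : d ^ (n + 1) * mf b = d ^ n * mf b * d ^ 1 + d ^ n * mf (δ b) := by
      rw [pow_succ, mul_assoc, hcomm b, mul_add, ← mul_assoc, pow_one]
    rw [hsplit]
    exact add_mem (mul_d_pow_mem_diffOps (ih b) 1) (ih (δ b))

lemma d_pow_mul_mem_diffOps (j : ℕ) {y : A} (hy : y ∈ diffOps mf d) :
    d ^ j * y ∈ diffOps mf d := by
  suffices diffOps mf d ≤ (diffOps mf d).comap (AddMonoidHom.mulLeft (d ^ j)) from this hy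
  refine diffOps_le fun b k => ?_
  simpa [← mul_assoc] using mul_d_pow_mem_diffOps (d_pow_mul_mf_mem_diffOps hcomm j b) k

lemma mul_mem_diffOps {x y : A} (hx : x ∈ diffOps mf d) (hy : y ∈ diffOps mf d) :
    x * y ∈ diffOps mf d := by
  suffices diffOps mf d ≤ (diffOps mf d).comap (AddMonoidHom.mulRight y) from this hx
  refine diffOps_le fun a j => ?_
  simpa [mul_assoc] using mf_mul_mem_diffOps a (d_pow_mul_mem_diffOps hcomm j hy)

end DiffOps

section MLow

variable {F A : Type*} [CommRing F] [Ring A] {N : ℕ} {mf : F →+* A} {d e : A} {n : ℕ}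

lemma MLow.add {Φ Ψ : Matrix (Fin N) (Fin N) A} (hΦ : MLow mf d e n Φ)
    (hΨ : MLow mf d e n Ψ) : MLow mf d e n (Φ + Ψ) :=
  fun i j => add_mem (hΦ i j) (hΨ i j)

lemma MLow.sum {ι : Type*} {t : Finset ι} {Φ : ι → Matrix (Fin N) (Fin N) A}
    (h : ∀ x ∈ t, MLow mf d e n (Φ x)) : MLow mf d e n (∑ x ∈ t, Φ x) := fun i j => by
  rw [Matrix.sum_apply]
  exact sum_mem fun x hx => h x hx i j

lemma MLow.mul {δ : F → F} (hcomm : ∀ g : F, d * mf g = mf g * d + mf (δ g))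
    {Φ Ψ : Matrix (Fin N) (Fin N) A} (hΦ : MLow mf d e 1 Φ) (hΨ : MLow mf d e 1 Ψ) :
    MLow mf d e 1 (Φ * Ψ) := fun i j => by
  rw [Matrix.mul_apply, low_one_eq_diffOps]
  exact sum_mem fun k _ => mul_mem_diffOps hcomm (low_one_eq_diffOps mf d e ▸ hΦ i k)
    (low_one_eq_diffOps mf d e ▸ hΨ k j)

end MLow

theorem cKdV_negative_Poisson_nonlocal_parts_general {F A : Type*} [CommRing F] [Ring A]
    {N : ℕ} (mf : F →+* A) (δ : F → F) (d e : A) (act : A → F → F)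
    (hcomm : ∀ g : F, d * mf g = mf g * d + mf (δ g))
    (Km : ℕ → Fin N → F) (γm : ℕ → Fin N → F)
    (B₀ Rinv : Matrix (Fin N) (Fin N) A)
    (Bneg : ℕ → Matrix (Fin N) (Fin N) A)
    (hBneg : ∀ s : ℕ, Bneg s = Rinv ^ s * B₀)
    (hB0loc : MLow mf d e 1 B₀)
    (hIBP : ∀ W γv : Fin N → F,
      MLow mf d e 1 (rankOne mf e 1 W γv * B₀ + rankOne mf e 1 W (appM act B₀ γv)))
    (hRs : ∀ s : ℕ, 1 ≤ s → MLow mf d e 1 (Rinv ^ s -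
      ∑ j ∈ Finset.Icc 1 s, rankOne mf e 1 (Km j) (γm (s - j + 1))))
    (hKrel : ∀ k : ℕ, 1 ≤ k → appM act B₀ (γm k) = Km k) :
    ∀ s : ℕ, 1 ≤ s → MLow mf d e 1 (Bneg s +
      ∑ j ∈ Finset.Icc 1 s, rankOne mf e 1 (Km j) (Km (s - j + 1))) := by
  intro s hs
  have hsplit : Bneg s + ∑ j ∈ Finset.Icc 1 s, rankOne mf e 1 (Km j) (Km (s - j + 1))
      = (Rinv ^ s - ∑ j ∈ Finset.Icc 1 s, rankOne mf e 1 (Km j) (γm (s - j + 1))) * B₀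
        + ∑ j ∈ Finset.Icc 1 s,
            (rankOne mf e 1 (Km j) (γm (s - j + 1)) * B₀
              + rankOne mf e 1 (Km j) (appM act B₀ (γm (s - j + 1)))) := by
    simp only [hKrel _ (Nat.le_add_left 1 _), hBneg, sub_mul, Finset.sum_mul,
      Finset.sum_add_distrib]
    abel
  rw [hsplit]
  exact (MLow.mul hcomm (hRs s hs) hB0loc).add (MLow.sum fun j _ => hIBP _ _)

/-- Nonlocal parts of the negative cKdV Poisson operators `B_{-s} = R^{-s} B₀`:
given `(R^{-s})_- = Σ_{j=1}^{s} K_{-j} ∂⁻¹ γ_{-s+j-1}^T`, `B₀` local and skew-adjoint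
(encoded by the integration-by-parts rule modulo local terms), and `B₀ γ_{-k} = K_{-k}`
for `k ≥ 1`, one has `(B_{-s})_- = -Σ_{j=1}^{s} K_{-j} ∂⁻¹ K_{-s+j-1}^T` for `s > 0`.
Below `Km k` stands for `K_{-k}` and `γm k` for `γ_{-k}` (`k ≥ 1`), so that the terms read
`K_{-j} ∂⁻¹ γ_{-(s-j+1)}^T` resp. `K_{-j} ∂⁻¹ K_{-(s-j+1)}^T`. -/
theorem cKdV_negative_Poisson_nonlocal_parts {F A : Type*} [CommRing F] [Ring A]
    {N : ℕ} (mf : F →+* A) (δ : F → F) (d e : A) (act : A → F → F)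
    (hde : d * e = 1) (hed : e * d = 1)
    (hcomm : ∀ g : F, d * mf g = mf g * d + mf (δ g))
    (hactmul : ∀ (x y : A) (g : F), act (x * y) g = act x (act y g))
    (hactm : ∀ g h : F, act (mf g) h = g * h)
    (hactd : ∀ g : F, act d g = δ g)
    (Km : ℕ → Fin N → F) (γm : ℕ → Fin N → F)
    (B₀ Rinv : Matrix (Fin N) (Fin N) A)
    (Bneg : ℕ → Matrix (Fin N) (Fin N) A)
    (hBneg : ∀ s : ℕ, Bneg s = Rinv ^ s * B₀)
    (hB0loc : MLow mf d e 1 B₀)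
    (hIBP : ∀ W γv : Fin N → F,
      MLow mf d e 1 (rankOne mf e 1 W γv * B₀ + rankOne mf e 1 W (appM act B₀ γv)))
    (hRs : ∀ s : ℕ, 1 ≤ s → MLow mf d e 1 (Rinv ^ s -
      ∑ j ∈ Finset.Icc 1 s, rankOne mf e 1 (Km j) (γm (s - j + 1))))
    (hKrel : ∀ k : ℕ, 1 ≤ k → appM act B₀ (γm k) = Km k) :
    ∀ s : ℕ, 1 ≤ s → MLow mf d e 1 (Bneg s +
      ∑ j ∈ Finset.Icc 1 s, rankOne mf e 1 (Km j) (Km (s - j + 1))) :=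
  cKdV_negative_Poisson_nonlocal_parts_general mf δ d e act hcomm Km γm B₀ Rinv Bneg hBneg hB0loc
    hIBP hRs hKrel
end
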